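/- If S is a uniformly random subset of [n] formed by including each agent independently with probability 1/2, then for the greedy algorithm with supply clipping 1/2, the expected total revenue when run on S is at least one quarter of the total revenue when run on all agents: E[Σ_j W_j(x^S)] ≥ (1/4)·Σ_j W_j(x). -/

import Mathlib

open Classical in
/-- One step of the greedy algorithm for unit-demand agents with supply clipping 1/2:
when pair `(i,j)` is processed (and `i` belongs to the active set `S`), if agent `i`
has bought nothing yet and the remaining fraction of item `j` exceeds `1/2`, she buys
`min (remaining) (B i / w i j)` of item `j`. -/
noncomputable def gstep (n m : ℕ) (w : Fin n → Fin m → ℝ) (B : Fin n → ℝ)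
    (S : Finset (Fin n)) (x : Fin n → Fin m → ℝ) (pr : Fin n × Fin m) :
    Fin n → Fin m → ℝ :=
  if pr.1 ∈ S ∧ (∀ j', x pr.1 j' = 0) ∧ 1 / 2 < 1 - ∑ i', x i' pr.2 then
    fun i j =>
      if i = pr.1 ∧ j = pr.2 then
        min (1 - ∑ i', x i' pr.2) (B pr.1 / w pr.1 pr.2)
      else x i j
  else x

/-- The greedy algorithm run on the active agent set `S`, processing the agent-item
pairs in the order given by the list `L` (decreasing weights), starting from the empty
allocation. -/
noncomputable def grun (n m : ℕ) (w : Fin n → Fin m → ℝ) (B : Fin n → ℝ)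
    (S : Finset (Fin n)) (L : List (Fin n × Fin m)) : Fin n → Fin m → ℝ :=
  L.foldl (gstep n m w B S) (fun _ _ => 0)

open Classical in
/-- The revenue attributed to item `j` in allocation `z`. -/
noncomputable def Wj (n m : ℕ) (w : Fin n → Fin m → ℝ) (z : Fin n → Fin m → ℝ)
    (j : Fin m) : ℝ :=
  ∑ i ∈ Finset.univ.filter (fun i => 0 < z i j), w i j * z i j

/-!
Couple the run on `S` with the run on all agents, pair by pair. While the full run still has
more than half of an item left, the run on `S` has sold no more of it; hence an agent of `S`
who buys in the full run but is skipped in the run on `S` has already bought there, earlier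
and so at a weight at least as large, at least half a unit or her whole budget. It follows
that every agent of `S` pays in the run on `S` at least half of what she pays in the full run.
Since each agent lies in half of all subsets `S`, averaging over `S` gives the factor `1/4`.
-/

namespace Greedy

section Counting

variable {ι M : Type*} [Fintype ι] [AddCommMonoid M]

lemma two_nsmul_sum_sum_finset (g : ι → M) :
    2 • ∑ S : Finset ι, ∑ i ∈ S, g i = 2 ^ Fintype.card ι • ∑ i, g i := by
  classical
  have hcompl : ∑ S : Finset ι, ∑ i ∈ Sᶜ, g i = ∑ S : Finset ι, ∑ i ∈ S, g i :=
    Equiv.sum_comp (compl_involutive.toPerm _) fun S => ∑ i ∈ S, g i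
  calc 2 • ∑ S : Finset ι, ∑ i ∈ S, g i
      = ∑ S : Finset ι, (∑ i ∈ S, g i + ∑ i ∈ Sᶜ, g i) := by
        rw [Finset.sum_add_distrib, hcompl, two_nsmul]
    _ = 2 ^ Fintype.card ι • ∑ i, g i := by
        simp only [Finset.sum_add_sum_compl, Finset.sum_const, Finset.card_univ,
          Fintype.card_finset]

end Counting

variable {n m : ℕ}

def remaining (x : Fin n → Fin m → ℝ) (j : Fin m) : ℝ := 1 - ∑ i, x i j

def payment (w x : Fin n → Fin m → ℝ) (i : Fin n) : ℝ := ∑ j, w i j * x i j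

def Buys (S : Finset (Fin n)) (x : Fin n → Fin m → ℝ) (c : Fin n) (j₀ : Fin m) : Prop :=
  c ∈ S ∧ (∀ j, x c j = 0) ∧ 1 / 2 < remaining x j₀

variable {w x : Fin n → Fin m → ℝ} {B : Fin n → ℝ} {S : Finset (Fin n)} {c : Fin n} {j₀ : Fin m}

lemma remaining_le_one (hx : 0 ≤ x) (j : Fin m) : remaining x j ≤ 1 :=
  sub_le_self _ (Finset.sum_nonneg fun i _ => hx i j)

lemma payment_nonneg (hw : ∀ i j, 0 ≤ w i j) (hx : 0 ≤ x) (i : Fin n) : 0 ≤ payment w x i :=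
  Finset.sum_nonneg fun j _ => mul_nonneg (hw i j) (hx i j)

lemma payment_eq_zero (h : ∀ j, x c j = 0) : payment w x c = 0 := by
  simp [payment, h]

lemma row_eq_zero_of_payment_nonpos (hw : ∀ i j, 0 < w i j) (hx : 0 ≤ x)
    (h : payment w x c ≤ 0) : ∀ j, x c j = 0 := by
  have hterms := (Finset.sum_eq_zero_iff_of_nonneg fun j _ => mul_nonneg (hw c j).le (hx c j)).1
    (h.antisymm (payment_nonneg (fun i j => (hw i j).le) hx c))
  intro j
  simpa [(hw c j).ne'] using hterms j (Finset.mem_univ j)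

lemma sum_Wj_eq_sum_payment (hx : 0 ≤ x) : ∑ j, Wj n m w x j = ∑ i, payment w x i := by
  classical
  have hWj : ∀ j, Wj n m w x j = ∑ i, w i j * x i j := fun j => by
    refine Finset.sum_filter_of_ne fun i _ hne => ?_
    exact (hx i j).lt_of_ne (right_ne_zero_of_mul hne).symm
  simp only [hWj, payment]
  exact Finset.sum_comm

lemma gstep_of_buys (h : Buys S x c j₀) :
    gstep n m w B S x (c, j₀) = fun i j =>
      if i = c ∧ j = j₀ then min (remaining x j₀) (B c / w c j₀) else x i j :=
  if_pos h

lemma gstep_of_not_buys (h : ¬Buys S x c j₀) : gstep n m w B S x (c, j₀) = x :=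
  if_neg h

lemma gstep_apply_of_ne {i : Fin n} {j : Fin m} (h : ¬(i = c ∧ j = j₀)) :
    gstep n m w B S x (c, j₀) i j = x i j := by
  by_cases hb : Buys S x c j₀
  · simp [gstep_of_buys hb, h]
  · rw [gstep_of_not_buys hb]

lemma remaining_gstep_of_ne {j : Fin m} (hj : j ≠ j₀) :
    remaining (gstep n m w B S x (c, j₀)) j = remaining x j := by
  simp only [remaining, gstep_apply_of_ne fun h => hj h.2]

lemma payment_gstep_of_ne {i : Fin n} (hi : i ≠ c) :
    payment w (gstep n m w B S x (c, j₀)) i = payment w x i := by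
  simp only [payment, gstep_apply_of_ne fun h => hi h.1]

lemma remaining_gstep_self (h : Buys S x c j₀) :
    remaining (gstep n m w B S x (c, j₀)) j₀
      = remaining x j₀ - min (remaining x j₀) (B c / w c j₀) := by
  rw [gstep_of_buys h]
  set v := min (remaining x j₀) (B c / w c j₀)
  have hcol : ∀ i, (if i = c ∧ j₀ = j₀ then v else x i j₀) = x i j₀ + if c = i then v else 0 :=
    fun i => by
      rcases eq_or_ne i c with rfl | hi
      · simp [h.2.1]
      · simp [hi, hi.symm]
  rw [remaining, Finset.sum_congr rfl fun i _ => hcol i, Finset.sum_add_distrib,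
    Finset.sum_ite_eq, if_pos (Finset.mem_univ c), remaining]
  ring

lemma payment_gstep_self (h : Buys S x c j₀) :
    payment w (gstep n m w B S x (c, j₀)) c = w c j₀ * min (remaining x j₀) (B c / w c j₀) := by
  rw [gstep_of_buys h]
  simp [payment, h.2.1]

lemma mul_min_div {a r b : ℝ} (ha : 0 < a) : a * min r (b / a) = min (a * r) b := by
  rw [mul_min_of_nonneg _ _ ha.le, mul_div_cancel₀ _ ha.ne']

lemma gstep_nonneg (hw : ∀ i j, 0 ≤ w i j) (hB : ∀ i, 0 ≤ B i) (hx : 0 ≤ x) (p : Fin n × Fin m) :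
    0 ≤ gstep n m w B S x p := by
  obtain ⟨c, j₀⟩ := p
  by_cases h : Buys S x c j₀
  · intro i j
    rw [gstep_of_buys h]
    dsimp only [Pi.zero_apply]
    split_ifs
    · exact le_min (by linarith [h.2.2]) (div_nonneg (hB c) (hw c j₀))
    · exact hx i j
  · rwa [gstep_of_not_buys h]

lemma foldl_gstep_nonneg (hw : ∀ i j, 0 ≤ w i j) (hB : ∀ i, 0 ≤ B i) (L : List (Fin n × Fin m))
    (hx : 0 ≤ x) :
    0 ≤ L.foldl (gstep n m w B S) x := by
  induction L generalizing x with
  | nil => exact hx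
  | cons p L ih => exact ih (gstep_nonneg hw hB hx p)

lemma grun_nonneg (hw : ∀ i j, 0 ≤ w i j) (hB : ∀ i, 0 ≤ B i) (L : List (Fin n × Fin m)) :
    0 ≤ grun n m w B S L :=
  foldl_gstep_nonneg hw hB L le_rfl

/-- What supply clipping buys: an agent who has bought got at least half a unit or spent her
whole budget, at a weight no smaller than that of any of her pairs still to come in `L`. -/
def Committed (w : Fin n → Fin m → ℝ) (B : Fin n → ℝ) (L : List (Fin n × Fin m))
    (x : Fin n → Fin m → ℝ) : Prop :=
  ∀ i j, (i, j) ∈ L → (¬∀ j', x i j' = 0) → min (w i j / 2) (B i) ≤ payment w x i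

lemma committed_zero (L : List (Fin n × Fin m)) : Committed w B L 0 :=
  fun _ _ _ hrow => absurd (fun _ => rfl) hrow

lemma Committed.gstep {L : List (Fin n × Fin m)} (hw : ∀ i j, 0 < w i j)
    (hL : ∀ q ∈ L, w q.1 q.2 ≤ w c j₀) (h : Committed w B ((c, j₀) :: L) x) :
    Committed w B L (gstep n m w B S x (c, j₀)) := by
  intro i j hij hrow
  by_cases hb : Buys S x c j₀
  · rcases eq_or_ne i c with rfl | hic
    · rw [payment_gstep_self hb, mul_min_div (hw i j₀)]
      have hle := hL _ hij
      have hhalf := hb.2.2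
      exact min_le_min (by nlinarith [hw i j₀]) le_rfl
    · rw [payment_gstep_of_ne hic]
      refine h i j (List.mem_cons_of_mem _ hij) fun hzero => hrow fun j' => ?_
      rw [gstep_apply_of_ne fun h => hic h.1, hzero]
  · rw [gstep_of_not_buys hb] at hrow ⊢
    exact h i j (List.mem_cons_of_mem _ hij) hrow

lemma sub_min_le_sub_min {r s b : ℝ} (h : r ≤ s) : r - min r b ≤ s - min s b := by
  rcases le_total r b with hr | hr <;> rcases le_total s b with hs | hs <;>
    simp only [min_eq_left, min_eq_right, hr, hs] <;> linarith

structure Coupled (S : Finset (Fin n)) (w xT xS : Fin n → Fin m → ℝ) : Prop where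
  remaining_le : ∀ j, 1 / 2 < remaining xT j → remaining xT j ≤ remaining xS j
  payment_le : ∀ i ∈ S, payment w xT i ≤ 2 * payment w xS i

lemma coupled_zero : Coupled S w 0 0 :=
  ⟨fun _ _ => le_rfl, fun i _ => by simp [payment]⟩

variable {xT xS : Fin n → Fin m → ℝ}

lemma Coupled.row_eq_zero (hw : ∀ i j, 0 < w i j) (hT : 0 ≤ xT) (h : Coupled S w xT xS)
    (hc : c ∈ S) (hrow : ∀ j, xS c j = 0) : ∀ j, xT c j = 0 :=
  row_eq_zero_of_payment_nonpos hw hT (by simpa [payment_eq_zero hrow] using h.payment_le c hc)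

lemma Coupled.remaining_gstep_self_le (hw : ∀ i j, 0 < w i j) (hB : ∀ i, 0 ≤ B i) (hT : 0 ≤ xT)
    (h : Coupled S w xT xS)
    (hT' : 1 / 2 < remaining (gstep n m w B Finset.univ xT (c, j₀)) j₀) :
    remaining (gstep n m w B Finset.univ xT (c, j₀)) j₀
      ≤ remaining (gstep n m w B S xS (c, j₀)) j₀ := by
  by_cases hbT : Buys Finset.univ xT c j₀ <;> by_cases hbS : Buys S xS c j₀
  · rw [remaining_gstep_self hbT, remaining_gstep_self hbS]
    exact sub_min_le_sub_min (h.remaining_le j₀ hbT.2.2)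
  · rw [remaining_gstep_self hbT, gstep_of_not_buys hbS]
    have hle := h.remaining_le j₀ hbT.2.2
    have hpos : 0 ≤ min (remaining xT j₀) (B c / w c j₀) :=
      le_min (by linarith [hbT.2.2]) (div_nonneg (hB c) (hw c j₀).le)
    linarith
  · rw [gstep_of_not_buys hbT] at hT'
    exact absurd ⟨Finset.mem_univ c, h.row_eq_zero hw hT hbS.1 hbS.2.1, hT'⟩ hbT
  · rw [gstep_of_not_buys hbT] at hT' ⊢
    rw [gstep_of_not_buys hbS]
    exact h.remaining_le j₀ hT'

lemma Coupled.payment_gstep_self_le (hw : ∀ i j, 0 < w i j) (hB : ∀ i, 0 ≤ B i) (hT : 0 ≤ xT)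
    (hS : 0 ≤ xS) (h : Coupled S w xT xS) (hc : c ∈ S)
    (hcommit : (¬∀ j, xS c j = 0) → min (w c j₀ / 2) (B c) ≤ payment w xS c) :
    payment w (gstep n m w B Finset.univ xT (c, j₀)) c
      ≤ 2 * payment w (gstep n m w B S xS (c, j₀)) c := by
  have hpay' : 0 ≤ payment w (gstep n m w B S xS (c, j₀)) c :=
    payment_nonneg (fun i j => (hw i j).le) (gstep_nonneg (fun i j => (hw i j).le) hB hS _) c
  by_cases hbT : Buys Finset.univ xT c j₀ <;> by_cases hbS : Buys S xS c j₀
  · rw [payment_gstep_self hbS] at hpay'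
    rw [payment_gstep_self hbT, payment_gstep_self hbS]
    have hle : w c j₀ * min (remaining xT j₀) (B c / w c j₀)
        ≤ w c j₀ * min (remaining xS j₀) (B c / w c j₀) :=
      mul_le_mul_of_nonneg_left (min_le_min_right _ (h.remaining_le j₀ hbT.2.2)) (hw c j₀).le
    linarith
  · -- `S` skips the pair although it has at least as much of `j₀` left, so `c` has bought
    have hbought : ¬∀ j, xS c j = 0 := fun hrow =>
      hbS ⟨hc, hrow, hbT.2.2.trans_le (h.remaining_le j₀ hbT.2.2)⟩
    have hcS := hcommit hbought
    have hone := remaining_le_one hT j₀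
    rw [payment_gstep_self hbT, gstep_of_not_buys hbS, mul_min_div (hw c j₀)]
    rcases le_total (w c j₀ / 2) (B c) with hm | hm
    · rw [min_eq_left hm] at hcS
      exact (min_le_left _ _).trans (by nlinarith [hw c j₀])
    · rw [min_eq_right hm] at hcS
      exact (min_le_right _ _).trans (by linarith [hB c])
  · rw [gstep_of_not_buys hbT]
    have := h.payment_le c hc
    rw [payment_eq_zero hbS.2.1] at this
    linarith
  · rw [gstep_of_not_buys hbT, gstep_of_not_buys hbS]
    exact h.payment_le c hc

lemma Coupled.gstep (hw : ∀ i j, 0 < w i j) (hB : ∀ i, 0 ≤ B i) (hT : 0 ≤ xT) (hS : 0 ≤ xS)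
    (h : Coupled S w xT xS)
    (hcommit : (¬∀ j, xS c j = 0) → min (w c j₀ / 2) (B c) ≤ payment w xS c) :
    Coupled S w (gstep n m w B Finset.univ xT (c, j₀)) (gstep n m w B S xS (c, j₀)) where
  remaining_le j hj := by
    rcases eq_or_ne j j₀ with rfl | hj₀
    · exact h.remaining_gstep_self_le hw hB hT hj
    · rw [remaining_gstep_of_ne hj₀] at hj
      rw [remaining_gstep_of_ne hj₀, remaining_gstep_of_ne hj₀]
      exact h.remaining_le j hj
  payment_le i hi := by
    rcases eq_or_ne i c with rfl | hic
    · exact h.payment_gstep_self_le hw hB hT hS hi hcommit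
    · rw [payment_gstep_of_ne hic, payment_gstep_of_ne hic]
      exact h.payment_le i hi

lemma coupled_foldl_gstep (hw : ∀ i j, 0 < w i j) (hB : ∀ i, 0 ≤ B i) {L : List (Fin n × Fin m)}
    (hL : L.Pairwise fun p q => w q.1 q.2 ≤ w p.1 p.2) (hT : 0 ≤ xT) (hS : 0 ≤ xS)
    (hC : Committed w B L xS) (h : Coupled S w xT xS) :
    Coupled S w (L.foldl (gstep n m w B Finset.univ) xT) (L.foldl (gstep n m w B S) xS) := by
  have hw' : ∀ i j, 0 ≤ w i j := fun i j => (hw i j).le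
  induction L generalizing xT xS with
  | nil => exact h
  | cons p L ih =>
    obtain ⟨c, j₀⟩ := p
    obtain ⟨hp, hL⟩ := List.pairwise_cons.1 hL
    exact ih hL (gstep_nonneg hw' hB hT _) (gstep_nonneg hw' hB hS _) (hC.gstep hw hp)
      (h.gstep hw hB hT hS (hC c j₀ List.mem_cons_self))

lemma coupled_grun (hw : ∀ i j, 0 < w i j) (hB : ∀ i, 0 ≤ B i) {L : List (Fin n × Fin m)}
    (hL : L.Pairwise fun p q => w q.1 q.2 ≤ w p.1 p.2) :
    Coupled S w (grun n m w B Finset.univ L) (grun n m w B S L) :=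
  coupled_foldl_gstep hw hB hL le_rfl le_rfl (committed_zero L) coupled_zero

lemma sum_payment_univ_le_two_mul_revenue (hw : ∀ i j, 0 < w i j) (hB : ∀ i, 0 ≤ B i)
    {L : List (Fin n × Fin m)} (hL : L.Pairwise fun p q => w q.1 q.2 ≤ w p.1 p.2)
    (S : Finset (Fin n)) :
    ∑ i ∈ S, payment w (grun n m w B Finset.univ L) i
      ≤ 2 * ∑ j, Wj n m w (grun n m w B S L) j := by
  have hw' : ∀ i j, 0 ≤ w i j := fun i j => (hw i j).le
  have hS : 0 ≤ grun n m w B S L := grun_nonneg hw' hB L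
  calc ∑ i ∈ S, payment w (grun n m w B Finset.univ L) i
      ≤ ∑ i ∈ S, 2 * payment w (grun n m w B S L) i :=
        Finset.sum_le_sum (coupled_grun hw hB hL).payment_le
    _ ≤ ∑ i, 2 * payment w (grun n m w B S L) i :=
        Finset.sum_le_sum_of_subset_of_nonneg (Finset.subset_univ S) fun i _ _ =>
          mul_nonneg zero_le_two (payment_nonneg hw' hS i)
    _ = 2 * ∑ j, Wj n m w (grun n m w B S L) j := by
        rw [← Finset.mul_sum, sum_Wj_eq_sum_payment hS]

end Greedy

theorem stmt_6_general (n m : ℕ) (w : Fin n → Fin m → ℝ) (B : Fin n → ℝ)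
    (hw : ∀ i j, 0 < w i j) (hB : ∀ i, 0 < B i)
    (L : List (Fin n × Fin m))
    (hL3 : L.Pairwise (fun p q => w q.1 q.2 ≤ w p.1 p.2)) :
    (1 / 4) * ∑ j, Wj n m w (grun n m w B Finset.univ L) j
      ≤ (∑ S : Finset (Fin n), ∑ j, Wj n m w (grun n m w B S L) j) / 2 ^ n := by
  have hB' : ∀ i, 0 ≤ B i := fun i => (hB i).le
  have hbound := Finset.sum_le_sum fun S (_ : S ∈ Finset.univ) =>
    Greedy.sum_payment_univ_le_two_mul_revenue hw hB' hL3 S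
  have hcount := Greedy.two_nsmul_sum_sum_finset (Greedy.payment w (grun n m w B Finset.univ L))
  rw [Greedy.sum_Wj_eq_sum_payment (Greedy.grun_nonneg (fun i j => (hw i j).le) hB' L),
    le_div_iff₀ (by positivity)]
  simp only [nsmul_eq_mul, Fintype.card_fin, Nat.cast_pow, Nat.cast_ofNat, ← Finset.mul_sum]
    at hcount hbound
  linarith

/-- Random sampling guarantee for the greedy algorithm with supply clipping 1/2: over a
uniformly random subset `S` of the agents (each agent included independently with
probability 1/2, i.e. uniform over all `2^n` subsets), the expected total revenue of
the run on `S` is at least one quarter of the total revenue of the run on all agents. -/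
theorem stmt_6 (n m : ℕ) (w : Fin n → Fin m → ℝ) (B : Fin n → ℝ)
    (hw : ∀ i j, 0 < w i j) (hB : ∀ i, 0 < B i)
    (L : List (Fin n × Fin m)) (hL1 : ∀ pr : Fin n × Fin m, pr ∈ L) (hL2 : L.Nodup)
    (hL3 : L.Pairwise (fun p q => w q.1 q.2 ≤ w p.1 p.2)) :
    (1 / 4) * ∑ j, Wj n m w (grun n m w B Finset.univ L) j
      ≤ (∑ S : Finset (Fin n), ∑ j, Wj n m w (grun n m w B S L) j) / 2 ^ n :=
  stmt_6_general n m w B hw hB L hL3
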